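/- If H is a nonzero dicotic (all-small) game, then for any short game G, the sequential compound G → H is also a nonzero dicotic game. -/

import Mathlib

namespace SetTheory

universe u

/-- Pre-games, as formerly in Mathlib (`SetTheory.PGame`, removed since). -/
inductive PGame : Type (u + 1)
  | mk : ∀ α β : Type u, (α → PGame) → (β → PGame) → PGame

namespace PGame

def LeftMoves : PGame → Type u
  | mk l _ _ _ => l

def RightMoves : PGame → Type u
  | mk _ r _ _ => r

def moveLeft : ∀ g : PGame, LeftMoves g → PGame
  | mk _l _ L _ => L

def moveRight : ∀ g : PGame, RightMoves g → PGame
  | mk _ _r _ R => R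

instance : Zero PGame :=
  ⟨⟨PEmpty, PEmpty, PEmpty.elim, PEmpty.elim⟩⟩

def neg : PGame → PGame
  | ⟨l, r, L, R⟩ => ⟨r, l, fun i => neg (R i), fun i => neg (L i)⟩

instance : Neg PGame :=
  ⟨neg⟩

/-- Auxiliary for `add`: the sum of `mk xl xr _ _` with `y`, by recursion on `y`. -/
def addAux (xl xr : Type u) (addL : xl → PGame.{u} → PGame.{u})
    (addR : xr → PGame.{u} → PGame.{u}) : PGame.{u} → PGame.{u}
  | mk yl yr yL yR =>
    mk (xl ⊕ yl) (xr ⊕ yr)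
      (Sum.elim (fun i => addL i (mk yl yr yL yR)) (fun j => addAux xl xr addL addR (yL j)))
      (Sum.elim (fun i => addR i (mk yl yr yL yR)) (fun j => addAux xl xr addL addR (yR j)))

/-- The sum `x + y` of pre-games (same recursion as the old Mathlib instance). -/
def add : PGame.{u} → PGame.{u} → PGame.{u}
  | mk xl xr xL xR => addAux xl xr (fun i => add (xL i)) (fun i => add (xR i))

instance : Add PGame.{u} :=
  ⟨add⟩

instance : Sub PGame :=
  ⟨fun x y => x + -y⟩

/-- The pre-game `star`, which is fuzzy with zero. -/
def star : PGame.{u} :=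
  ⟨PUnit, PUnit, fun _ => 0, fun _ => 0⟩

/-- Two pre-games are identical if their left and right sets are identical. -/
def Identical : PGame.{u} → PGame.{u} → Prop
  | mk _ _ xL xR, mk _ _ yL yR =>
    Relator.BiTotal (fun i j => Identical (xL i) (yL j)) ∧
      Relator.BiTotal (fun i j => Identical (xR i) (yR j))

scoped infix:50 " ≡ " => PGame.Identical

/-- A short game is a game with a finite set of moves at every turn. -/
class inductive Short : PGame.{u} → Type (u + 1)
  | mk :
    ∀ {α β : Type u} {L : α → PGame.{u}} {R : β → PGame.{u}} (_ : ∀ i : α, Short (L i))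
      (_ : ∀ j : β, Short (R j)) [Fintype α] [Fintype β], Short ⟨α, β, L, R⟩

end PGame

end SetTheory

open SetTheory

open scoped PGame

namespace SeqCompound

open Classical in
/-- The sequential compound `G → H` of two pregames. -/
noncomputable def seqc : PGame → PGame → PGame
  | PGame.mk α β L R, H =>
    if Nonempty α then
      if Nonempty β then
        PGame.mk α β (fun a => seqc (L a) H) (fun b => seqc (R b) H)
      else
        PGame.mk α H.RightMoves (fun a => seqc (L a) H) H.moveRight
    else
      if Nonempty β then
        PGame.mk H.LeftMoves β H.moveLeft (fun b => seqc (R b) H)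
      else H

/-- A pregame is dicotic (all-small) if in every subposition,
Left has an option iff Right has an option. -/
def Dicotic : PGame → Prop
  | PGame.mk α β L R =>
    (Nonempty α ↔ Nonempty β) ∧ (∀ a, Dicotic (L a)) ∧ (∀ b, Dicotic (R b))

/-- The canonical nonnegative integer game `{n-1 | }`. -/
def intGame : ℕ → PGame
  | 0 => 0
  | n + 1 => PGame.mk PUnit PEmpty (fun _ => intGame n) PEmpty.elim

/-- `upSum k` is the disjunctive sum `↑¹ + ↑² + ⋯ + ↑ᵏ`. -/
def upSum : ℕ → PGame
  | 0 => 0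
  | k + 1 => upSum k +
      PGame.mk PUnit PUnit (fun _ => 0) (fun _ => PGame.star - upSum k)

/-- `upPow k` is the game `↑^(k+1) = {0 | ∗ - (↑¹ + ⋯ + ↑ᵏ)}`. -/
def upPow (k : ℕ) : PGame :=
  PGame.mk PUnit PUnit (fun _ => 0) (fun _ => PGame.star - upSum k)

/-- Sequential compound of a list of games. -/
noncomputable def seqList : List PGame → PGame
  | [] => 0
  | G :: l => seqc G (seqList l)

end SeqCompound

/-!
A position of `G → H` is either `G' → H` for a position `G'` of `G`, or a position of `H`.
In the first kind the move sets are those of `G'`, except that a side with no moves in `G'`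
inherits its moves from `H`; since `H` is dicotic and nonzero it has moves on both sides, so
both sides of `G' → H` are nonempty as soon as one is. Likewise `G → H` has no moves at all
only when neither `G` nor `H` has any.
-/

namespace SetTheory.PGame

theorem identical_zero_iff {x : PGame} :
    (x ≡ 0) ↔ IsEmpty x.LeftMoves ∧ IsEmpty x.RightMoves := by
  cases x with
  | mk α β L R =>
    change Identical (mk α β L R) (mk PEmpty PEmpty PEmpty.elim PEmpty.elim) ↔ _
    simp [Identical, Relator.BiTotal, Relator.LeftTotal, Relator.RightTotal, LeftMoves,
      RightMoves, isEmpty_iff]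

end SetTheory.PGame

namespace SeqCompound

theorem Dicotic.nonempty_leftMoves_iff :
    ∀ {x : PGame}, Dicotic x → (Nonempty x.LeftMoves ↔ Nonempty x.RightMoves)
  | PGame.mk _ _ _ _, ⟨h, _, _⟩ => h

theorem Dicotic.moveLeft : ∀ {x : PGame}, Dicotic x → ∀ i, Dicotic (x.moveLeft i)
  | PGame.mk _ _ _ _, ⟨_, hL, _⟩, i => hL i

theorem Dicotic.moveRight : ∀ {x : PGame}, Dicotic x → ∀ j, Dicotic (x.moveRight j)
  | PGame.mk _ _ _ _, ⟨_, _, hR⟩, j => hR j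

theorem Dicotic.nonempty_moves {x : PGame} (hx : Dicotic x) (hx0 : ¬x ≡ 0) :
    Nonempty x.LeftMoves ∧ Nonempty x.RightMoves := by
  rw [PGame.identical_zero_iff, not_and_or, not_isEmpty_iff, not_isEmpty_iff,
    hx.nonempty_leftMoves_iff, or_self] at hx0
  exact ⟨hx.nonempty_leftMoves_iff.2 hx0, hx0⟩

theorem seqc_identical_zero_iff {G H : PGame} : (seqc G H ≡ 0) ↔ (G ≡ 0) ∧ (H ≡ 0) := by
  cases G with
  | mk α β L R =>
    rw [seqc]
    by_cases hα : Nonempty α <;> by_cases hβ : Nonempty β <;>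
      simp only [hα, hβ, if_true, if_false] <;>
      simp_all [PGame.identical_zero_iff, PGame.LeftMoves, PGame.RightMoves]

theorem Dicotic.seqc : ∀ (G : PGame) {H : PGame}, Dicotic H → ¬(H ≡ 0) → Dicotic (seqc G H)
  | PGame.mk α β L R, H, hH, hH0 => by
    have ih_left (a : α) := Dicotic.seqc (L a) hH hH0
    have ih_right (b : β) := Dicotic.seqc (R b) hH hH0
    obtain ⟨hHl, hHr⟩ := hH.nonempty_moves hH0
    rw [SeqCompound.seqc]
    by_cases hα : Nonempty α <;> by_cases hβ : Nonempty β <;>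
      simp only [hα, hβ, if_true, if_false]
    · exact ⟨⟨fun _ => hβ, fun _ => hα⟩, ih_left, ih_right⟩
    · exact ⟨⟨fun _ => hHr, fun _ => hα⟩, ih_left, hH.moveRight⟩
    · exact ⟨⟨fun _ => hβ, fun _ => hHl⟩, hH.moveLeft, ih_right⟩
    · exact hH

end SeqCompound

open SeqCompound in
theorem seqc_dicotic_general (G H : PGame)
    (hH : Dicotic H) (hH0 : ¬H ≡ 0) :
    Dicotic (seqc G H) ∧ ¬seqc G H ≡ 0 :=
  ⟨hH.seqc G hH0, fun h => hH0 (seqc_identical_zero_iff.1 h).2⟩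

open SeqCompound in
/-- if `H` is a nonzero dicotic game then so is `G → H`. -/
theorem seqc_dicotic (G H : PGame) [PGame.Short G] [PGame.Short H]
    (hH : Dicotic H) (hH0 : ¬H ≡ 0) :
    Dicotic (seqc G H) ∧ ¬seqc G H ≡ 0 :=
  seqc_dicotic_general G H hH hH0
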